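/- arXiv:2605.16187 — 2 statements merged into one kernel-verified Lean document; each statement's English description precedes it below -/
import Mathlib

section
/- Acyclicity of optimal edge-based traffic engineering solutions (Theorem A.1 of the paper): suppose every cost function f_e : ℝ → ℝ (e ∈ E) and f_{ek} : ℝ → ℝ (e ∈ E, k ∈ K) is convex and strictly monotone increasing on [0,∞). If X : K → ℝ^E is a feasible edge-based assignment such that for some commodity k the support of X_k (the set of edges e with X_k(e) > 0) contains the edge set of a directed cycle, then there exists a feasible assignment X̃ with J(X̃) < J(X), where J(X) = ∑_{e ∈ E} f_e(∑_{k ∈ K} X_k(e)) + ∑_{e ∈ E} ∑_{k ∈ K} f_{ek}(X_k(e)). Consequently, any feasible assignment minimizing J over all feasible assignments contains no directed cycle in the support of any X_k. -/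
lemma tele_sum {V E : Type*} (src tgt : E → V) (g : V → ℝ) :
    ∀ (l : List E) (a : E), (a :: l).Chain' (fun x y => tgt x = src y) →
      ((a :: l).map (fun e => g (src e) - g (tgt e))).sum
        = g (src a) - g (tgt ((a :: l).getLast (List.cons_ne_nil a l))) := by
  intro l
  induction l with
  | nil => intro a _; simp
  | cons b l ih =>
    intro a hch
    rw [List.Chain', List.isChain_cons_cons] at hch
    have h1 := ih b hch.2
    have hlast : (a :: b :: l).getLast (List.cons_ne_nil a (b::l))
        = (b :: l).getLast (List.cons_ne_nil b l) := by
      simp [List.getLast_cons]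
    rw [hlast]
    simp only [List.map_cons, List.sum_cons] at h1 ⊢
    rw [h1, hch.1]
    ring

/-- Acyclicity of optimal edge-based TE solutions (Theorem A.1): with convex, strictly
increasing edge costs `f e` and edge-commodity costs `fk e k`, any feasible assignment whose
support (for some commodity) contains a directed cycle admits a strictly better feasible
assignment; consequently, optimal feasible assignments contain no directed cycle in the
support of any commodity. -/
theorem acyclic_optimal_edge_based_TE
    {V E K : Type*} [Fintype V] [Fintype E] [Fintype K]
    [DecidableEq V] [DecidableEq E]
    (src tgt : E → V) (hloop : ∀ e, src e ≠ tgt e)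
    (M : Matrix V E ℝ)
    (hM : ∀ v e, M v e = if src e = v then 1 else if tgt e = v then -1 else 0)
    (s t : K → V) (hst : ∀ k, s k ≠ t k)
    (d : K → ℝ) (hd : ∀ k, 0 < d k)
    (C : E → ℝ)
    (Feasible : (K → E → ℝ) → Prop)
    (hFeasible : ∀ X, Feasible X ↔
      ((∀ k, M.mulVec (X k) =
          d k • (Pi.single (s k) (1 : ℝ) - Pi.single (t k) (1 : ℝ))) ∧
       (∀ k e, 0 ≤ X k e) ∧
       (∀ e, ∑ k, X k e ≤ C e) ∧
       (∀ k e, (tgt e = s k ∨ src e = t k) → X k e = 0)))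
    (f : E → ℝ → ℝ) (fk : E → K → ℝ → ℝ)
    (hf_conv : ∀ e, ConvexOn ℝ (Set.Ici (0 : ℝ)) (f e))
    (hf_mono : ∀ e, StrictMonoOn (f e) (Set.Ici (0 : ℝ)))
    (hfk_conv : ∀ e k, ConvexOn ℝ (Set.Ici (0 : ℝ)) (fk e k))
    (hfk_mono : ∀ e k, StrictMonoOn (fk e k) (Set.Ici (0 : ℝ)))
    (J : (K → E → ℝ) → ℝ)
    (hJ : ∀ X, J X = ∑ e, f e (∑ k, X k e) + ∑ e, ∑ k, fk e k (X k e))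
    (HasCycle : (K → E → ℝ) → Prop)
    (hHasCycle : ∀ X, HasCycle X ↔
      ∃ (k : K) (es : List E) (hne : es ≠ []),
        es.Nodup ∧ es.Chain' (fun a b => tgt a = src b) ∧
        tgt (es.getLast hne) = src (es.head hne) ∧
        ∀ e ∈ es, 0 < X k e) :
    (∀ X, Feasible X → HasCycle X → ∃ X', Feasible X' ∧ J X' < J X) ∧
    (∀ X, Feasible X → (∀ X', Feasible X' → J X ≤ J X') → ¬ HasCycle X) := by
  classical
  have main : ∀ X, Feasible X → HasCycle X → ∃ X', Feasible X' ∧ J X' < J X := by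
    intro X hX hC
    obtain ⟨hcons, hnn, hcap, hzero⟩ := (hFeasible X).mp hX
    obtain ⟨k0, es, hne, hnd, hch, hwrap, hpos⟩ := (hHasCycle X).mp hC
    obtain ⟨a, l, rfl⟩ := List.exists_cons_of_ne_nil hne
    have haS : a ∈ (a :: l).toFinset := by simp
    set S : Finset E := (a :: l).toFinset with hSdef
    set ε : ℝ := S.inf' (show S.Nonempty from ⟨a, haS⟩) (X k0) with hεdef
    have hεpos : 0 < ε := by
      rw [hεdef, Finset.lt_inf'_iff]
      intro e he
      exact hpos e (by simpa [hSdef] using he)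
    have hεle : ∀ e ∈ (a :: l), ε ≤ X k0 e := by
      intro e he
      exact Finset.inf'_le _ (by simpa [hSdef] using he)
    set X' : K → E → ℝ :=
      fun k e => if k = k0 ∧ e ∈ (a :: l) then X k e - ε else X k e with hX'def
    have hle : ∀ k e, X' k e ≤ X k e := by
      intro k e
      simp only [hX'def]
      split
      · linarith
      · exact le_refl _
    have hnn' : ∀ k e, 0 ≤ X' k e := by
      intro k e
      simp only [hX'def]
      split
      · rename_i h
        rw [h.1]
        linarith [hεle e h.2]
      · exact hnn k e
    -- the indicator vector of the cycle has zero divergence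
    have hcyc : ∀ v, ∑ e ∈ S, M v e = 0 := by
      intro v
      set g : V → ℝ := fun u => if u = v then 1 else 0 with hgdef
      have hMg : ∀ e, M v e = g (src e) - g (tgt e) := by
        intro e
        rw [hM v e]
        by_cases h1 : src e = v
        · have h2 : tgt e ≠ v := fun h => hloop e (h1.trans h.symm)
          simp [hgdef, h1, h2]
        · by_cases h2 : tgt e = v <;> simp [hgdef, h1, h2]
      rw [hSdef, List.sum_toFinset _ hnd]
      have : (a :: l).map (M v) = (a :: l).map (fun e => g (src e) - g (tgt e)) :=
        List.map_congr_left fun e _ => hMg e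
      rw [this, tele_sum src tgt g l a hch]
      have hh : (a :: l).head hne = a := rfl
      rw [hh] at hwrap
      rw [hwrap]
      ring
    have hfeas' : Feasible X' := by
      rw [hFeasible]
      refine ⟨?_, hnn', ?_, ?_⟩
      · intro k
        by_cases hk : k = k0
        · subst hk
          have hdecomp : X' k = X k - fun e => if e ∈ (a :: l) then ε else 0 := by
            funext e
            simp only [hX'def, Pi.sub_apply]
            by_cases he : e ∈ (a :: l) <;> simp [he]
          rw [hdecomp, Matrix.mulVec_sub]
          have hzero2 : M.mulVec (fun e => if e ∈ (a :: l) then ε else 0) = 0 := by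
            funext v
            simp only [Matrix.mulVec, dotProduct, Pi.zero_apply]
            have : ∀ e, M v e * (if e ∈ (a :: l) then ε else 0)
                = if e ∈ S then M v e * ε else 0 := by
              intro e
              by_cases he : e ∈ (a :: l)
              · rw [if_pos he, if_pos (by simpa [hSdef] using he)]
              · rw [if_neg he, if_neg (by simpa [hSdef] using he), mul_zero]
            rw [Finset.sum_congr rfl fun e _ => this e]
            rw [Finset.sum_ite_mem, Finset.univ_inter, ← Finset.sum_mul, hcyc v,
              zero_mul]
          rw [hzero2, sub_zero]
          exact hcons k
        · have : X' k = X k := by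
            funext e
            simp [hX'def, hk]
          rw [this]; exact hcons k
      · intro e
        exact le_trans (Finset.sum_le_sum fun k _ => hle k e) (hcap e)
      · intro k e h
        by_cases hc : k = k0 ∧ e ∈ (a :: l)
        · exfalso
          have h0 : X k e = 0 := hzero k e h
          have := hpos e hc.2
          rw [← hc.1] at this
          linarith
        · simp only [hX'def, if_neg hc]
          exact hzero k e h
    refine ⟨X', hfeas', ?_⟩
    rw [hJ, hJ]
    rw [← Finset.sum_add_distrib, ← Finset.sum_add_distrib]
    have hT' : ∀ e ∈ (a :: l), (∑ k, X' k e) = (∑ k, X k e) - ε := by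
      intro e he
      have : ∀ k, X' k e = X k e - (if k = k0 then ε else 0) := by
        intro k
        simp only [hX'def]
        by_cases hk : k = k0
        · rw [if_pos ⟨hk, he⟩, if_pos hk]
        · rw [if_neg (fun h => hk h.1), if_neg hk, sub_zero]
      rw [Finset.sum_congr rfl fun k _ => this k, Finset.sum_sub_distrib,
        Finset.sum_ite_eq' Finset.univ k0 (fun _ => ε), if_pos (Finset.mem_univ k0)]
    have hTnn : ∀ (e : E), (0:ℝ) ≤ ∑ k, X k e := fun e =>
      Finset.sum_nonneg fun k _ => hnn k e
    have hT'nn : ∀ (e : E), (0:ℝ) ≤ ∑ k, X' k e := fun e =>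
      Finset.sum_nonneg fun k _ => hnn' k e
    have hterm_le : ∀ e, f e (∑ k, X' k e) + ∑ k, fk e k (X' k e)
        ≤ f e (∑ k, X k e) + ∑ k, fk e k (X k e) := by
      intro e
      have h1 : f e (∑ k, X' k e) ≤ f e (∑ k, X k e) :=
        ((hf_mono e).monotoneOn) (hT'nn e) (hTnn e)
          (Finset.sum_le_sum fun k _ => hle k e)
      have h2 : (∑ k, fk e k (X' k e)) ≤ ∑ k, fk e k (X k e) :=
        Finset.sum_le_sum fun k _ =>
          ((hfk_mono e k).monotoneOn) (hnn' k e) (hnn k e) (hle k e)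
      linarith
    have hterm_lt : f a (∑ k, X' k a) + ∑ k, fk a k (X' k a)
        < f a (∑ k, X k a) + ∑ k, fk a k (X k a) := by
      have hma : a ∈ (a :: l) := List.mem_cons_self
      have h1 : f a (∑ k, X' k a) < f a (∑ k, X k a) := by
        apply (hf_mono a) (hT'nn a) (hTnn a)
        rw [hT' a hma]
        linarith
      have h2 : (∑ k, fk a k (X' k a)) ≤ ∑ k, fk a k (X k a) :=
        Finset.sum_le_sum fun k _ =>
          ((hfk_mono a k).monotoneOn) (hnn' k a) (hnn k a) (hle k a)
      linarith
    exact Finset.sum_lt_sum (fun e _ => hterm_le e) ⟨a, Finset.mem_univ a, hterm_lt⟩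
  refine ⟨main, ?_⟩
  intro X hX hopt hC
  obtain ⟨X', hX', hlt⟩ := main X hX hC
  exact absurd (hopt X' hX') (not_le.mpr hlt)
end

section
/- Acyclicity with per-commodity costs only (remark after Theorem A.1): suppose every cost function f_{ek} : ℝ → ℝ (e ∈ E, k ∈ K) is convex and strictly monotone increasing on [0,∞). If X : K → ℝ^E is a feasible edge-based assignment such that for some commodity k the support of X_k contains the edge set of a directed cycle, then there exists a feasible assignment X̃ with ∑_{e ∈ E} ∑_{k ∈ K} f_{ek}(X̃_k(e)) < ∑_{e ∈ E} ∑_{k ∈ K} f_{ek}(X_k(e)). Consequently, any feasible assignment minimizing this objective contains no directed cycle in the support of any X_k. -/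
private lemma map_tgt_eq_aux {E V : Type*} (src tgt : E → V) :
    ∀ (es : List E) (hne : es ≠ []), es.Chain' (fun a b => tgt a = src b) →
      es.map tgt = es.tail.map src ++ [tgt (es.getLast hne)]
  | [], hne, _ => absurd rfl hne
  | [e], _, _ => by simp
  | (e :: e' :: rest), _, hch => by
      have hch' := hch
      rw [List.Chain', List.isChain_cons_cons] at hch'
      have ih := map_tgt_eq_aux src tgt (e' :: rest) (by simp) hch'.2
      simp only [List.map_cons, List.tail_cons] at ih ⊢
      rw [ih, hch'.1]
      simp [List.getLast]

private lemma sum_map_sub_aux {E V : Type*} (src tgt : E → V) (g : V → ℝ) (es : List E) :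
    (es.map (fun e => g (src e) - g (tgt e))).sum
      = (es.map (g ∘ src)).sum - (es.map (g ∘ tgt)).sum := by
  induction es with
  | nil => simp
  | cons a l ih => simp [ih]; ring

private lemma cycle_sum_zero {E V : Type*} (src tgt : E → V) (g : V → ℝ)
    (es : List E) (hne : es ≠ []) (hch : es.Chain' (fun a b => tgt a = src b))
    (hwrap : tgt (es.getLast hne) = src (es.head hne)) :
    (es.map (fun e => g (src e) - g (tgt e))).sum = 0 := by
  have hperm : List.Perm (es.map tgt) (es.map src) := by
    rw [map_tgt_eq_aux src tgt es hne hch, hwrap]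
    have h2 : es.map src = src (es.head hne) :: es.tail.map src := by
      obtain ⟨a, l, rfl⟩ := List.exists_cons_of_ne_nil hne
      simp
    rw [h2]
    exact List.perm_append_singleton _ _
  have h3 : (es.map (g ∘ tgt)).sum = (es.map (g ∘ src)).sum := by
    rw [← List.map_map, ← List.map_map]
    exact (hperm.map g).sum_eq
  rw [sum_map_sub_aux, h3, sub_self]

/-- Acyclicity with per-commodity costs only: with convex, strictly increasing
edge-commodity costs `fk e k`, any feasible assignment whose support (for some commodity)
contains a directed cycle admits a feasible assignment with strictly smaller objective
`∑ e, ∑ k, fk e k (X k e)`; consequently, minimizers contain no cycle in any support. -/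
theorem acyclic_optimal_per_commodity_costs
    {V E K : Type*} [Fintype V] [Fintype E] [Fintype K]
    [DecidableEq V] [DecidableEq E]
    (src tgt : E → V) (hloop : ∀ e, src e ≠ tgt e)
    (M : Matrix V E ℝ)
    (hM : ∀ v e, M v e = if src e = v then 1 else if tgt e = v then -1 else 0)
    (s t : K → V) (hst : ∀ k, s k ≠ t k)
    (d : K → ℝ) (hd : ∀ k, 0 < d k)
    (C : E → ℝ)
    (Feasible : (K → E → ℝ) → Prop)
    (hFeasible : ∀ X, Feasible X ↔
      ((∀ k, M.mulVec (X k) =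
          d k • (Pi.single (s k) (1 : ℝ) - Pi.single (t k) (1 : ℝ))) ∧
       (∀ k e, 0 ≤ X k e) ∧
       (∀ e, ∑ k, X k e ≤ C e) ∧
       (∀ k e, (tgt e = s k ∨ src e = t k) → X k e = 0)))
    (fk : E → K → ℝ → ℝ)
    (hfk_conv : ∀ e k, ConvexOn ℝ (Set.Ici (0 : ℝ)) (fk e k))
    (hfk_mono : ∀ e k, StrictMonoOn (fk e k) (Set.Ici (0 : ℝ)))
    (HasCycle : (K → E → ℝ) → Prop)
    (hHasCycle : ∀ X, HasCycle X ↔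
      ∃ (k : K) (es : List E) (hne : es ≠ []),
        es.Nodup ∧ es.Chain' (fun a b => tgt a = src b) ∧
        tgt (es.getLast hne) = src (es.head hne) ∧
        ∀ e ∈ es, 0 < X k e) :
    (∀ X, Feasible X → HasCycle X →
      ∃ X', Feasible X' ∧
        ∑ e, ∑ k, fk e k (X' k e) < ∑ e, ∑ k, fk e k (X k e)) ∧
    (∀ X, Feasible X →
      (∀ X', Feasible X' →
        ∑ e, ∑ k, fk e k (X k e) ≤ ∑ e, ∑ k, fk e k (X' k e)) →
      ¬ HasCycle X) := by
  classical
  have main : ∀ X, Feasible X → HasCycle X →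
      ∃ X', Feasible X' ∧
        ∑ e, ∑ k, fk e k (X' k e) < ∑ e, ∑ k, fk e k (X k e) := by
    intro X hX hC
    rw [hHasCycle] at hC
    obtain ⟨k0, es, hne, hnd, hch, hwrap, hpos⟩ := hC
    rw [hFeasible] at hX
    obtain ⟨hflow, hnn, hcap, hzero⟩ := hX
    have htf : es.toFinset.Nonempty := by
      obtain ⟨a, l, rfl⟩ := List.exists_cons_of_ne_nil hne
      exact ⟨a, by simp⟩
    set ε := es.toFinset.inf' htf (X k0) with hεdef
    have hεle : ∀ e ∈ es, ε ≤ X k0 e := fun e he =>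
      Finset.inf'_le _ (List.mem_toFinset.mpr he)
    have hεpos : 0 < ε := by
      rw [hεdef, Finset.lt_inf'_iff]
      intro e he; exact hpos e (List.mem_toFinset.mp he)
    set y : E → ℝ := fun e => if e ∈ es then ε else 0 with hydef
    set X' : K → E → ℝ := fun k => if k = k0 then X k0 - y else X k with hX'def
    have hX'k0 : ∀ e, X' k0 e = X k0 e - y e := by intro e; simp [hX'def]
    have hX'ne : ∀ k, k ≠ k0 → X' k = X k := by intro k hk; simp [hX'def, hk]
    -- M v e as difference of indicators
    have hMv : ∀ v e, M v e
        = (if src e = v then (1:ℝ) else 0) - (if tgt e = v then 1 else 0) := by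
      intro v e
      rw [hM]
      by_cases h1 : src e = v
      · have h2 : ¬ tgt e = v := fun h2 => hloop e (h1.trans h2.symm)
        simp [h1, h2]
      · by_cases h2 : tgt e = v <;> simp [h1, h2]
    -- mulVec of y is zero
    have hMy : M.mulVec y = 0 := by
      funext v
      have hterm : ∀ e, M v e * y e = if e ∈ es.toFinset then M v e * ε else 0 := by
        intro e
        simp only [hydef, List.mem_toFinset]
        split <;> simp
      have : M.mulVec y v = ∑ e ∈ es.toFinset, M v e * ε := by
        rw [Matrix.mulVec, dotProduct]
        rw [Finset.sum_congr rfl fun e _ => hterm e, Finset.sum_ite_mem,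
          Finset.univ_inter]
      rw [this, ← Finset.sum_mul]
      have hsum : ∑ e ∈ es.toFinset, M v e = 0 := by
        rw [List.sum_toFinset _ hnd]
        have := cycle_sum_zero src tgt (fun w => if w = v then (1:ℝ) else 0)
          es hne hch hwrap
        rw [← this]
        exact congrArg List.sum (List.map_congr_left fun e _ => hMv v e)
      rw [hsum, zero_mul]
      rfl
    -- pointwise bounds
    have hnn' : ∀ k e, 0 ≤ X' k e := by
      intro k e
      by_cases hk : k = k0
      · rw [hk, hX'k0]
        by_cases he : e ∈ es
        · simp only [hydef, if_pos he]
          exact sub_nonneg.mpr (hεle e he)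
        · simp only [hydef, if_neg he, sub_zero]; exact hnn k0 e
      · rw [hX'ne k hk]; exact hnn k e
    have hle : ∀ k e, X' k e ≤ X k e := by
      intro k e
      by_cases hk : k = k0
      · rw [hk, hX'k0]
        by_cases he : e ∈ es
        · simp only [hydef, if_pos he]
          linarith
        · simp [hydef, he]
      · rw [hX'ne k hk]
    have hfeas' : Feasible X' := by
      rw [hFeasible]
      refine ⟨?_, hnn', ?_, ?_⟩
      · intro k
        by_cases hk : k = k0
        · rw [hk]
          have : X' k0 = X k0 - y := by funext e; exact hX'k0 e
          rw [this, Matrix.mulVec_sub, hMy, sub_zero]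
          exact hflow k0
        · rw [hX'ne k hk]; exact hflow k
      · intro e
        calc ∑ k, X' k e ≤ ∑ k, X k e := Finset.sum_le_sum fun k _ => hle k e
          _ ≤ C e := hcap e
      · intro k e he
        by_cases hk : k = k0
        · rw [hk] at he ⊢
          have hx0 : X k0 e = 0 := hzero k0 e he
          have hes : e ∉ es := fun hmem => absurd (hpos e hmem) (by rw [hx0]; simp)
          rw [hX'k0]
          simp [hydef, hes, hx0]
        · rw [hX'ne k hk]; exact hzero k e he
    refine ⟨X', hfeas', ?_⟩
    have hfle : ∀ e k, fk e k (X' k e) ≤ fk e k (X k e) := by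
      intro e k
      exact (hfk_mono e k).monotoneOn (hnn' k e) (hnn k e) (hle k e)
    have he0 : es.head hne ∈ es := List.head_mem hne
    apply Finset.sum_lt_sum (fun e _ => Finset.sum_le_sum fun k _ => hfle e k)
    refine ⟨es.head hne, Finset.mem_univ _, ?_⟩
    apply Finset.sum_lt_sum (fun k _ => hfle _ k)
    refine ⟨k0, Finset.mem_univ _, ?_⟩
    have hstrict : X' k0 (es.head hne) < X k0 (es.head hne) := by
      rw [hX'k0]
      simp only [hydef, if_pos he0]
      linarith
    exact hfk_mono _ k0 (hnn' k0 _) (hnn k0 _) hstrict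
  refine ⟨main, ?_⟩
  intro X hX hmin hcyc
  obtain ⟨X', hX'feas, hlt⟩ := main X hX hcyc
  exact absurd (hmin X' hX'feas) (not_le.mpr hlt)
end
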